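/- arXiv:math/0011182 — 2 statements merged into one kernel-verified Lean document; each statement's English description precedes it below -/
import Mathlib

section
/- Let R be a PID and A a free R-algebra (free as an R-module). If M is an A-module such that every finite subset of M is contained in an A-free and R-pure submodule of M, then every countably generated R-submodule of M is a free R-module (i.e., M is ℵ₁-free as an R-module). -/
/-!
Every finite subset of `M` lies in an `A`-free, `R`-pure submodule `U`. As `A` is `R`-free, so is
`U`; hence `M` is `R`-torsion-free, and purity of `U` makes `M ⧸ U` torsion-free. In the free
module `U` a finite set lies in the span `P` of finitely many basis vectors, and `U ⧸ P` is again
torsion-free. So every finite subset of `M` lies in a finitely generated `P` with `M ⧸ P`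
torsion-free, a property inherited by submodules of `M`.

This is the hypothesis of Pontryagin's criterion. Enumerating generators of a countably generated
`N` gives a chain `0 = C 0 ≤ C 1 ≤ ⋯` of finitely generated submodules exhausting `N` with
torsion-free quotients `N ⧸ C n`. Each `C (n + 1) / C n` is finitely generated and torsion-free
over the PID `R`, hence free, so a basis of `C n` extends to one of `C (n + 1)`; the union of
these nested bases is a basis of `N`.
-/

open Module Submodule Set

section Saturation

variable {R M : Type*} [Ring R] [IsDomain R] [AddCommGroup M] [Module R M]

theorem Submodule.isTorsionFree_quotient_iff {P : Submodule R M} :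
    IsTorsionFree R (M ⧸ P) ↔ ∀ (r : R) (x : M), r ≠ 0 → r • x ∈ P → x ∈ P := by
  rw [isTorsionFree_iff_smul_eq_zero]
  refine ⟨fun h r x hr hx => ?_, fun h r y hy => ?_⟩
  · rw [← Quotient.mk_eq_zero, Quotient.mk_smul] at hx
    exact (Quotient.mk_eq_zero P).mp ((h r _ hx).resolve_left hr)
  · obtain ⟨x, rfl⟩ := Quotient.mk_surjective P y
    rw [← Quotient.mk_smul, Quotient.mk_eq_zero] at hy
    rw [or_iff_not_imp_left, Quotient.mk_eq_zero]
    exact fun hr => h r x hr hy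

theorem Submodule.isTorsionFree_quotient_comap {N : Type*} [AddCommGroup N] [Module R N]
    (f : N →ₗ[R] M) {P : Submodule R M} [IsTorsionFree R (M ⧸ P)] :
    IsTorsionFree R (N ⧸ P.comap f) :=
  isTorsionFree_quotient_iff.mpr fun r x hr hx =>
    isTorsionFree_quotient_iff.mp ‹_› r (f x) hr (by simpa using hx)

theorem Module.Basis.isTorsionFree_quotient_span_image {ι : Type*} (b : Basis ι R M)
    (κ : Set ι) : IsTorsionFree R (M ⧸ span R (b '' κ)) := by
  refine isTorsionFree_quotient_iff.mpr fun r x hr hx => ?_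
  rw [b.mem_span_image, map_smul, Finsupp.support_smul_eq hr] at hx
  exact b.mem_span_image.mpr hx

theorem Module.Free.exists_fg_isTorsionFree_quotient [Module.Free R M] {s : Set M}
    (hs : s.Finite) : ∃ P : Submodule R M, s ⊆ P ∧ P.FG ∧ IsTorsionFree R (M ⧸ P) := by
  classical
  let b := chooseBasis R M
  let κ : Set (ChooseBasisIndex R M) := ⋃ x ∈ s, ↑(b.repr x).support
  refine ⟨span R (b '' κ), fun x hx => ?_, ?_, b.isTorsionFree_quotient_span_image κ⟩
  · exact b.mem_span_image.mpr fun i hi => mem_biUnion hx hi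
  · exact fg_def.mpr ⟨_, ((hs.biUnion fun x _ => (b.repr x).support.finite_toSet).image b), rfl⟩

theorem Submodule.isTorsionFree_quotient_of_pure [IsTorsionFree R M] {U : Submodule R M}
    (hU : ∀ (r : R) (u : M), u ∈ U → (∃ m : M, r • m = u) → ∃ u' ∈ U, r • u' = u) :
    IsTorsionFree R (M ⧸ U) := by
  refine isTorsionFree_quotient_iff.mpr fun r x hr hx => ?_
  obtain ⟨u, hu, hux⟩ := hU r _ hx ⟨x, rfl⟩
  rwa [← smul_right_injective M hr hux]

theorem Submodule.exists_fg_isTorsionFree_quotient_of_free {U : Submodule R M}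
    [Module.Free R U] [IsTorsionFree R (M ⧸ U)] {s : Set M} (hs : s.Finite) (hsU : s ⊆ U) :
    ∃ P : Submodule R M, s ⊆ P ∧ P.FG ∧ IsTorsionFree R (M ⧸ P) := by
  obtain ⟨P, hsP, hPfg, hP⟩ :=
    Module.Free.exists_fg_isTorsionFree_quotient (R := R) (M := U)
      (hs.preimage Subtype.val_injective.injOn)
  refine ⟨P.map U.subtype, fun x hx => ⟨⟨x, hsU hx⟩, hsP hx, rfl⟩, hPfg.map _, ?_⟩
  refine isTorsionFree_quotient_iff.mpr fun r x hr hx => ?_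
  have hxU : x ∈ U := isTorsionFree_quotient_iff.mp ‹_› r x hr (map_subtype_le U P hx)
  obtain ⟨y, hy, hyx⟩ := hx
  refine ⟨⟨x, hxU⟩, isTorsionFree_quotient_iff.mp hP r _ hr ?_, rfl⟩
  rwa [show r • (⟨x, hxU⟩ : U) = y from Subtype.ext (by simpa using hyx.symm)]

end Saturation

section Pontryagin

variable {R N : Type*} [CommRing R] [IsDomain R] [IsPrincipalIdealRing R]
  [AddCommGroup N] [Module R N]

theorem Submodule.exists_linearIndepOn_extension {P Q : Submodule R N} (hPQ : P ≤ Q)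
    (hQ : Q.FG) [IsTorsionFree R (N ⧸ P)] {s : Set N} (hs : LinearIndepOn R id s)
    (hsP : span R s = P) : ∃ t, s ⊆ t ∧ LinearIndepOn R id t ∧ span R t = Q := by
  have : Module.Finite R (Q.map P.mkQ) := Module.Finite.iff_fg.mpr (hQ.map _)
  -- `Q / P` is free, and lifts of one of its bases complete `s`.
  let b := Free.chooseBasis R (Q.map P.mkQ)
  choose q hqQ hq using fun i => (b i).2
  have hqb : P.mkQ ∘ q = (Q.map P.mkQ).subtype ∘ b := funext hq
  have hind : LinearIndependent R (P.mkQ ∘ q) := by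
    rw [hqb]
    exact b.linearIndependent.map' _ (ker_subtype _)
  have hsP' : s ⊆ P := hsP ▸ subset_span
  refine ⟨s ∪ range q, subset_union_left, ?_, le_antisymm ?_ ?_⟩
  · exact hs.union_id_of_quotient hsP'
      ((linearIndepOn_range_iff hind.injective.of_comp _).mpr hind)
  · exact span_le.mpr (union_subset (hsP'.trans hPQ) (range_subset_iff.mpr hqQ))
  · rw [span_union, hsP, ← comap_map_mkQ, ← map_le_iff_le_comap, map_span, ← range_comp, hqb,
      range_comp, ← map_span, b.span_eq, map_top, range_subtype]

theorem Module.free_of_iSup_fg_isTorsionFree_quotient (C : ℕ → Submodule R N) (hC : Monotone C)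
    (h0 : C 0 = ⊥) (hfg : ∀ n, (C n).FG) (htf : ∀ n, IsTorsionFree R (N ⧸ C n))
    (htop : ⨆ n, C n = ⊤) : Module.Free R N := by
  -- `t = s` when `s` is not a basis of `C n`, so that `choose` below gives a total function.
  have hext : ∀ n (s : Set N), ∃ t, s ⊆ t ∧ (LinearIndepOn R id s → span R s = C n →
      LinearIndepOn R id t ∧ span R t = C (n + 1)) := by
    intro n s
    by_cases hs : LinearIndepOn R id s ∧ span R s = C n
    · obtain ⟨t, hst, ht⟩ := exists_linearIndepOn_extension (hC n.le_succ) (hfg _) hs.1 hs.2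
      exact ⟨t, hst, fun _ _ => ht⟩
    · exact ⟨s, subset_rfl, fun h1 h2 => absurd ⟨h1, h2⟩ hs⟩
  choose next hsub hnext using hext
  obtain ⟨T, hT0, hTsucc⟩ : ∃ T : ℕ → Set N, T 0 = ∅ ∧ ∀ n, T (n + 1) = next n (T n) :=
    ⟨fun n => Nat.rec ∅ next n, rfl, fun _ => rfl⟩
  have hT : ∀ n, LinearIndepOn R id (T n) ∧ span R (T n) = C n := by
    intro n
    induction n with
    | zero => exact ⟨hT0 ▸ linearIndepOn_empty R id, by simp [hT0, h0]⟩
    | succ n ih => exact hTsucc n ▸ hnext n _ ih.1 ih.2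
  have hTmono : Monotone T := monotone_nat_of_le_succ fun n => hTsucc n ▸ hsub n (T n)
  have hind : LinearIndepOn R id (⋃ n, T n) :=
    linearIndepOn_iUnion_of_directed hTmono.directed_le fun n => (hT n).1
  have hspan : span R (⋃ n, T n) = ⊤ := by simp only [span_iUnion, hT, htop]
  exact Free.of_basis (Basis.mk hind.linearIndependent
    (by rw [← hspan]; exact span_mono fun x hx => ⟨⟨x, hx⟩, rfl⟩))

theorem Module.free_of_countable_of_span_eq_top [IsTorsionFree R N] {S : Set N}
    (hS : S.Countable) (hspan : span R S = ⊤)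
    (h : ∀ s : Finset N, ∃ P : Submodule R N, ↑s ⊆ (P : Set N) ∧ P.FG ∧ IsTorsionFree R (N ⧸ P)) :
    Module.Free R N := by
  classical
  -- `0` is added so that the enumeration exists also for `S = ∅`.
  obtain ⟨f, hf⟩ := (hS.insert 0).exists_eq_range (insert_nonempty 0 S)
  have hgen : ∀ s : Finset N, ∃ t : Finset N, ↑s ⊆ (span R (t : Set N) : Set N) ∧
      IsTorsionFree R (N ⧸ span R (t : Set N)) := by
    intro s
    obtain ⟨P, hsP, ⟨t, rfl⟩, hP⟩ := h s
    exact ⟨t, hsP, hP⟩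
  choose g hsg htf using hgen
  obtain ⟨T, hT0, hT⟩ : ∃ T : ℕ → Finset N,
      T 0 = ∅ ∧ ∀ n, T (n + 1) = g (insert (f n) (T n)) :=
    ⟨fun n => Nat.rec ∅ (fun n t => g (insert (f n) t)) n, rfl, fun _ => rfl⟩
  have hsucc : ∀ n, ↑(insert (f n) (T n)) ⊆ (span R (T (n + 1) : Set N) : Set N) :=
    fun n => hT n ▸ hsg _
  refine free_of_iSup_fg_isTorsionFree_quotient (fun n => span R (T n : Set N))
    (monotone_nat_of_le_succ fun n => span_le.mpr ((Finset.coe_subset.mpr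
      (Finset.subset_insert _ _)).trans (hsucc n)))
    (by simp [hT0]) (fun n => fg_span (T n).finite_toSet) (fun n => ?_) ?_
  · cases n with
    | zero => exact isTorsionFree_quotient_iff.mpr fun r x hr hx => by simpa [hT0, hr] using hx
    | succ n => exact hT n ▸ htf _
  · rw [eq_top_iff, ← hspan, span_le]
    intro x hx
    obtain ⟨n, rfl⟩ : x ∈ range f := hf ▸ mem_insert_of_mem _ hx
    exact mem_iSup_of_mem (n + 1) (hsucc n (by simp))

theorem Submodule.free_span_of_countable {M : Type*} [AddCommGroup M] [Module R M]
    [IsTorsionFree R M]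
    (h : ∀ s : Finset M, ∃ P : Submodule R M, ↑s ⊆ (P : Set M) ∧ P.FG ∧ IsTorsionFree R (M ⧸ P))
    {S : Set M} (hS : S.Countable) : Module.Free R (span R S) := by
  refine free_of_countable_of_span_eq_top (hS.preimage Subtype.val_injective)
    span_span_coe_preimage fun s => ?_
  obtain ⟨P, hsP, hPfg, hP⟩ := h (s.map (Function.Embedding.subtype _))
  refine ⟨P.comap (span R S).subtype, fun x hx => hsP (by simpa using hx), ?_,
    isTorsionFree_quotient_comap _⟩
  exact fg_of_fg_map_injective _ (injective_subtype _)
    (by rw [map_comap_subtype]; exact hPfg.of_le inf_le_right)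

end Pontryagin

section Algebra

variable {R A M : Type*} [CommRing R] [Ring A] [Algebra R A] [Module.Free R A]
  [AddCommGroup M] [Module A M] [Module R M] [IsScalarTower R A M]

theorem Submodule.free_restrictScalars (U : Submodule A M) [Module.Free A U] :
    Module.Free R (U.restrictScalars R) :=
  (Free.trans (S := A) : Module.Free R U)

variable [IsDomain R]

theorem Module.isTorsionFree_of_forall_mem_free
    (h : ∀ x : M, ∃ U : Submodule A M, x ∈ U ∧ Module.Free A U) : IsTorsionFree R M := by
  refine .of_smul_eq_zero fun r x hrx => ?_
  obtain ⟨U, hxU, hU⟩ := h x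
  have := free_restrictScalars (R := R) U
  have : r • (⟨x, hxU⟩ : U.restrictScalars R) = 0 := Subtype.ext hrx
  exact (smul_eq_zero.mp this).imp_right (congrArg Subtype.val)

end Algebra

/-- Observation 2.3, Pontryagin-type criterion: Let `R` be a PID
and `A` a free `R`-algebra. If `M` is an `A`-module such that every finite
subset of `M` is contained in an `A`-free and `R`-pure `A`-submodule, then
every countably generated `R`-submodule of `M` is a free `R`-module, i.e. `M`
is `ℵ₁`-free as an `R`-module. -/
theorem stmt9 {R : Type} [CommRing R] [IsDomain R] [IsPrincipalIdealRing R]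
    {A : Type} [Ring A] [Algebra R A] [Module.Free R A]
    {M : Type} [AddCommGroup M] [Module A M] [Module R M] [IsScalarTower R A M]
    (h : ∀ s : Finset M, ∃ U : Submodule A M, (↑s : Set M) ⊆ (U : Set M) ∧
      Module.Free A U ∧
      (∀ (r : R) (u : M), u ∈ U → (∃ m : M, r • m = u) → ∃ u' ∈ U, r • u' = u)) :
    ∀ N : Submodule R M, (∃ S : Set M, S.Countable ∧ N = Submodule.span R S) →
      Module.Free R N := by
  rintro N ⟨S, hS, rfl⟩
  have : IsTorsionFree R M := isTorsionFree_of_forall_mem_free (A := A) fun x =>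
    let ⟨U, hxU, hU, _⟩ := h {x}
    ⟨U, hxU (by simp), hU⟩
  refine free_span_of_countable (fun s => ?_) hS
  obtain ⟨U, hsU, hU, hpure⟩ := h s
  have := free_restrictScalars (R := R) U
  have := isTorsionFree_quotient_of_pure (U := U.restrictScalars R) hpure
  exact exists_fg_isTorsionFree_quotient_of_free (U := U.restrictScalars R) s.finite_toSet hsU
end

section
/- With y_v = y_{v,0,g} as defined from branches v in Br(T_C) and g ∈ B̂: if v ≠ w are branches with branch point m = br(v,w), then y_v − y_w ± q_m g = q_{m+1}(y_{v,m+1,g} − y_{w,m+1,g}), where the sign ± is v(m) − w(m) ∈ {+1, −1}. -/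
/-!
Split the series for `y_v - y_w` at the branch point `m`. Below `m` the branches agree, so the
summands of `y_v` and `y_w` cancel. At `m` the node terms coincide and only `q_m (v m - w m) g`
survives. Beyond `m`, `c 0 i = q_{m+1} c (m+1) i`, so every summand is `q_{m+1}` times the
corresponding summand of `y_{·,m+1,g}`.
-/

section BranchSeries

variable {R M : Type*} [Ring R] [AddCommGroup M] [Module R M]
  (c : ℕ → ℕ → R) (node : List Bool → M) (g : M)

/-- The `i`-th summand of `y_{u,n,g}`, where `c n i` plays the role of `q_i / q_n`. -/
def branchSummand (u : ℕ → Bool) (n i : ℕ) : M :=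
  if n ≤ i then
    c n i • node (List.ofFn fun j : Fin i => u j) + (c n i * (bif u i then 1 else 0)) • g
  else 0

variable {c node g}

theorem branchSummand_of_lt {u : ℕ → Bool} {n i : ℕ} (h : i < n) :
    branchSummand c node g u n i = 0 :=
  if_neg (Nat.not_le_of_lt h)

theorem branchSummand_congr {v w : ℕ → Bool} {i : ℕ} (h : ∀ j ≤ i, v j = w j) (n : ℕ) :
    branchSummand c node g v n i = branchSummand c node g w n i := by
  have hnode : (List.ofFn fun j : Fin i => v j) = List.ofFn fun j : Fin i => w j :=
    congrArg List.ofFn (funext fun j => h j j.2.le)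
  simp only [branchSummand, hnode, h i le_rfl]

theorem branchSummand_zero_sub_of_forall_lt_eq {v w : ℕ → Bool} {m : ℕ} (h : ∀ j < m, v j = w j) :
    branchSummand c node g v 0 m - branchSummand c node g w 0 m =
      (c 0 m * ((bif v m then 1 else 0) - (bif w m then 1 else 0))) • g := by
  have hnode : (List.ofFn fun j : Fin m => v j) = List.ofFn fun j : Fin m => w j :=
    congrArg List.ofFn (funext fun j => h j j.2)
  simp only [branchSummand, if_pos m.zero_le, hnode, mul_sub, sub_smul]
  abel

theorem branchSummand_zero_eq_smul {q : ℕ → R} {u : ℕ → Bool} {n i : ℕ}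
    (hc0 : c 0 i = q n * c n i) (h : n ≤ i) :
    branchSummand c node g u 0 i = q n • branchSummand c node g u n i := by
  simp only [branchSummand, if_pos i.zero_le, if_pos h, hc0, smul_add, smul_smul, mul_assoc]

theorem branchSummand_sub_eq_single_add_smul {q : ℕ → R} {v w : ℕ → Bool} {m : ℕ}
    (hc0 : ∀ i, m + 1 ≤ i → c 0 i = q (m + 1) * c (m + 1) i) (hbr : ∀ j < m, v j = w j)
    (i : ℕ) :
    branchSummand c node g v 0 i - branchSummand c node g w 0 i =
      (Pi.single m ((c 0 m * ((bif v m then 1 else 0) - (bif w m then 1 else 0))) • g) :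
          ℕ → M) i +
        q (m + 1) •
          (branchSummand c node g v (m + 1) i - branchSummand c node g w (m + 1) i) := by
  rcases lt_trichotomy i m with hlt | rfl | hgt
  · have hagree : ∀ j ≤ i, v j = w j := fun j hj => hbr j (hj.trans_lt hlt)
    rw [branchSummand_congr hagree, branchSummand_congr hagree, sub_self, sub_self, smul_zero,
      Pi.single_eq_of_ne hlt.ne, add_zero]
  · rw [branchSummand_zero_sub_of_forall_lt_eq hbr, Pi.single_eq_same,
      branchSummand_of_lt i.lt_succ_self, branchSummand_of_lt i.lt_succ_self, sub_self,
      smul_zero, add_zero]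
  · rw [branchSummand_zero_eq_smul (hc0 i hgt) hgt, branchSummand_zero_eq_smul (hc0 i hgt) hgt,
      Pi.single_eq_of_ne hgt.ne', zero_add, smul_sub]

end BranchSeries

theorem stmt11_general {R : Type} [CommRing R]
    (q : ℕ → R) (hq0 : q 0 = 1)
    (c : ℕ → ℕ → R) (hc : ∀ n i, n ≤ i → q n * c n i = q i)
    {M : Type} [AddCommGroup M] [Module R M] [TopologicalSpace M]
    [IsTopologicalAddGroup M] [ContinuousConstSMul R M] [T2Space M]
    (node : List Bool → M)   -- τ ↦ τ × α, the finite branches of the tree T_α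
    (g : M)
    (hsum : ∀ (u : ℕ → Bool) (n : ℕ), Summable fun i : ℕ =>
      if n ≤ i then
        c n i • node (List.ofFn fun j : Fin i => u j) +
          (c n i * (bif u i then 1 else 0)) • g
      else 0)
    (y : (ℕ → Bool) → ℕ → M)
    (hy : ∀ (u : ℕ → Bool) (n : ℕ), y u n = ∑' i : ℕ,
      if n ≤ i then
        c n i • node (List.ofFn fun j : Fin i => u j) +
          (c n i * (bif u i then 1 else 0)) • g
      else 0)
    (v w : ℕ → Bool) (m : ℕ) (hbr : ∀ i < m, v i = w i) :
    y v 0 - y w 0 =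
      (q m * ((bif v m then 1 else 0) - (bif w m then 1 else 0))) • g +
        q (m + 1) • (y v (m + 1) - y w (m + 1)) := by
  have hc0 : ∀ i, c 0 i = q i := fun i => by simpa [hq0] using hc 0 i i.zero_le
  have hc0_succ : ∀ i, m + 1 ≤ i → c 0 i = q (m + 1) * c (m + 1) i := fun i hi => by
    rw [hc0, hc _ _ hi]
  have hasSum_y : ∀ u n, HasSum (branchSummand c node g u n) (y u n) := fun u n => by
    rw [hy]; exact (hsum u n).hasSum
  have hlhs := (hasSum_y v 0).sub (hasSum_y w 0)
  have hrhs := (hasSum_pi_single m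
      ((q m * ((bif v m then 1 else 0) - (bif w m then 1 else 0))) • g)).add
    (((hasSum_y v (m + 1)).sub (hasSum_y w (m + 1))).const_smul (q (m + 1)))
  rw [funext (branchSummand_sub_eq_single_add_smul hc0_succ hbr), hc0] at hlhs
  exact hlhs.unique hrhs

/-- With `y v = y (v,0,g)` as defined from infinite branches and
`g ∈ B̂`: if `v ≠ w` are branches with branch point `m = br(v,w)`, then
`y v - y w ± q m • g = q (m+1) • (y (v,m+1,g) - y (w,m+1,g))`, where the sign
`±` is `v m - w m ∈ {+1, -1}`; equivalently
`y v - y w = (q m * (v m - w m)) • g + q (m+1) • (y (v,m+1,g) - y (w,m+1,g))`. -/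
theorem stmt11 {R : Type} [CommRing R] [IsDomain R] [IsPrincipalIdealRing R]
    [Countable R] (hRnf : ¬ IsField R)
    (s : ℕ → R) (hs : ∀ n, s n ≠ 0)
    (q : ℕ → R) (hq0 : q 0 = 1) (hq : ∀ n, q (n + 1) = s n * (q n) ^ 2)
    (c : ℕ → ℕ → R) (hc : ∀ n i, n ≤ i → q n * c n i = q i)
    {M : Type} [AddCommGroup M] [Module R M] [TopologicalSpace M]
    [IsTopologicalAddGroup M] [ContinuousConstSMul R M] [T2Space M]
    (node : List Bool → M)   -- τ ↦ τ × α, the finite branches of the tree T_α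
    (g : M)
    (hsum : ∀ (u : ℕ → Bool) (n : ℕ), Summable fun i : ℕ =>
      if n ≤ i then
        c n i • node (List.ofFn fun j : Fin i => u j) +
          (c n i * (bif u i then 1 else 0)) • g
      else 0)
    (y : (ℕ → Bool) → ℕ → M)
    (hy : ∀ (u : ℕ → Bool) (n : ℕ), y u n = ∑' i : ℕ,
      if n ≤ i then
        c n i • node (List.ofFn fun j : Fin i => u j) +
          (c n i * (bif u i then 1 else 0)) • g
      else 0)
    (v w : ℕ → Bool) (m : ℕ) (hbr : ∀ i < m, v i = w i) (hm : v m ≠ w m) :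
    y v 0 - y w 0 =
      (q m * ((bif v m then 1 else 0) - (bif w m then 1 else 0))) • g +
        q (m + 1) • (y v (m + 1) - y w (m + 1)) :=
  stmt11_general q hq0 c hc node g hsum y hy v w m hbr
end
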